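/- arXiv:2204.13860 — 2 statements merged into one kernel-verified Lean document; each statement's English description precedes it below -/
import Mathlib

section
/- The map θ : (Fin 3)³ → ℤ/2ℤ × ℤ defined by θ(a,b,c) = (1,0) if (a,b,c) ∈ {(0,1,0),(0,2,0)}, θ(a,b,c) = (0,1) if (a,b,c) ∈ {(1,0,2),(2,0,1)}, θ(a,b,c) = (0,−1) if (a,b,c) ∈ {(1,0,1),(2,0,2)}, and θ(a,b,c) = (0,0) otherwise, satisfies the symmetry conditions with respect to the good involution ρ (ρ(0)=0, ρ(1)=2, ρ(2)=1) of P_3: for all a,b,c in Fin 3, θ(a,b,c) + θ(ρ(a),b,c) = (0,0), θ(a,b,c) + θ(a▷b,ρ(b),c) = (0,0), and θ(a,b,c) + θ(a▷c,b▷c,ρ(c)) = (0,0). -/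
/-- The quandle operation on `Fin 3` for the quandle `P₃`. -/
def P3op (x y : Fin 3) : Fin 3 := ![![0,0,0], ![2,1,1], ![1,2,2]] x y

/-- The involution `ρ` on `Fin 3`: `ρ(0)=0, ρ(1)=2, ρ(2)=1`. -/
def P3rho (x : Fin 3) : Fin 3 := ![0, 2, 1] x

/-- The map `θ : (Fin 3)³ → ℤ/2ℤ × ℤ` from Oshiro's cocycle. -/
def theta (a b c : Fin 3) : ZMod 2 × ℤ :=
  if (a, b, c) = (0, 1, 0) ∨ (a, b, c) = (0, 2, 0) then (1, 0)
  else if (a, b, c) = (1, 0, 2) ∨ (a, b, c) = (2, 0, 1) then (0, 1)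
  else if (a, b, c) = (1, 0, 1) ∨ (a, b, c) = (2, 0, 2) then (0, -1)
  else (0, 0)

theorem theta_add_theta_P3rho_left (a b c : Fin 3) :
    theta a b c + theta (P3rho a) b c = (0, 0) := by
  revert a b c
  decide

theorem theta_add_theta_P3op_P3rho_middle (a b c : Fin 3) :
    theta a b c + theta (P3op a b) (P3rho b) c = (0, 0) := by
  revert a b c
  decide

theorem theta_add_theta_P3op_P3rho_right (a b c : Fin 3) :
    theta a b c + theta (P3op a c) (P3op b c) (P3rho c) = (0, 0) := by
  revert a b c
  decide

theorem theta_symmetry_conditions :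
    ∀ a b c : Fin 3,
      theta a b c + theta (P3rho a) b c = (0, 0) ∧
      theta a b c + theta (P3op a b) (P3rho b) c = (0, 0) ∧
      theta a b c + theta (P3op a c) (P3op b c) (P3rho c) = (0, 0) :=
  fun a b c =>
    ⟨theta_add_theta_P3rho_left a b c, theta_add_theta_P3op_P3rho_middle a b c,
      theta_add_theta_P3op_P3rho_right a b c⟩
end

section
/- The map θ : (Fin 3)³ → ℤ/2ℤ × ℤ defined by θ(a,b,c) = (1,0) if (a,b,c) ∈ {(0,1,0),(0,2,0)}, θ(a,b,c) = (0,1) if (a,b,c) ∈ {(1,0,2),(2,0,1)}, θ(a,b,c) = (0,−1) if (a,b,c) ∈ {(1,0,1),(2,0,2)}, and θ(a,b,c) = (0,0) otherwise, is a symmetric quandle 3-cocycle of (P_3, ρ): it simultaneously satisfies (i) the quandle 3-cocycle condition θ(a,c,d) − θ(a▷b,c,d) − θ(a,b,d) + θ(a▷c,b▷c,d) + θ(a,b,c) − θ(a▷d,b▷d,c▷d) = (0,0) for all a,b,c,d; (ii) θ(a,a,b) = (0,0) and θ(a,b,b) = (0,0) for all a,b; and (iii) θ(a,b,c) + θ(ρ(a),b,c)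 = (0,0), θ(a,b,c) + θ(a▷b,ρ(b),c) = (0,0), and θ(a,b,c) + θ(a▷c,b▷c,ρ(c)) = (0,0) for all a,b,c, where ρ(0)=0, ρ(1)=2, ρ(2)=1. -/
section SymmetricQuandleCocycle

variable {X A : Type*} [AddCommGroup A]

/-- `op a b` stands for `a ▷ b`. -/
def IsQuandleThreeCocycle (op : X → X → X) (φ : X → X → X → A) : Prop :=
  ∀ a b c d : X,
    φ a c d - φ (op a b) c d - φ a b d + φ (op a c) (op b c) d
      + φ a b c - φ (op a d) (op b d) (op c d) = 0

def IsNormalizedThreeCochain (φ : X → X → X → A) : Prop :=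
  ∀ a b : X, φ a a b = 0 ∧ φ a b b = 0

def IsSymmetricThreeCochain (op : X → X → X) (ρ : X → X) (φ : X → X → X → A) : Prop :=
  ∀ a b c : X,
    φ a b c + φ (ρ a) b c = 0 ∧
    φ a b c + φ (op a b) (ρ b) c = 0 ∧
    φ a b c + φ (op a c) (op b c) (ρ c) = 0

end SymmetricQuandleCocycle

theorem theta_isQuandleThreeCocycle : IsQuandleThreeCocycle P3op theta := by
  unfold IsQuandleThreeCocycle
  decide

theorem theta_isNormalizedThreeCochain : IsNormalizedThreeCochain theta := by
  unfold IsNormalizedThreeCochain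
  decide

theorem theta_isSymmetricThreeCochain : IsSymmetricThreeCochain P3op P3rho theta := by
  unfold IsSymmetricThreeCochain
  decide

theorem theta_is_symmetric_quandle_3cocycle :
    (∀ a b c d : Fin 3,
      theta a c d - theta (P3op a b) c d - theta a b d + theta (P3op a c) (P3op b c) d
        + theta a b c - theta (P3op a d) (P3op b d) (P3op c d) = (0, 0)) ∧
    (∀ a b : Fin 3, theta a a b = (0, 0) ∧ theta a b b = (0, 0)) ∧
    (∀ a b c : Fin 3,
      theta a b c + theta (P3rho a) b c = (0, 0) ∧
      theta a b c + theta (P3op a b) (P3rho b) c = (0, 0) ∧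
      theta a b c + theta (P3op a c) (P3op b c) (P3rho c) = (0, 0)) :=
  ⟨theta_isQuandleThreeCocycle, theta_isNormalizedThreeCochain, theta_isSymmetricThreeCochain⟩
end
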